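/- The R_ε-Conjecture fails for the equivalent norm |{a_i}| = ‖{a_i}‖_{ℓ₂} + sup_i |a_i| on ℓ₂: the vectors f_i = (e_{2i} + e_{2i+1})/(√2 + 1), which have norm one in this new norm, form a Riesz basic sequence, but no infinite subset J satisfies (1-ε)Σ|a_i|² ≤ |Σ_{i∈J} a_i f_i|² ≤ (1+ε)Σ|a_i|² for small ε. Specifically, for J with |J| = n ≥ 2 and a_i = 1/√n, |Σ_{i∈J} a_i f_i| = (√2 + 1/√n)/(√2+1), which is bounded away from 1. -/

import Mathlib

/-! The `f_i` have disjoint supports `{2i, 2i+1}`, hence are pairwise orthogonal with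
`‖f_i‖² = 2/(√2+1)²`, and Pythagoras gives the Riesz bounds with `A = B = 2/(√2+1)²`.
For a constant coefficient `c` on `n` indices the `ℓ₂` part of the new norm grows like `√n`
while the sup part stays `|c|/(√2+1)`; with `c = 1/√n` the new norm is
`(√2 + 1/√n)/(√2+1) ≤ (√2 + 1/√2)/(√2+1) < 1` as soon as `n ≥ 2`, so already two indices of
`J` violate the lower `R_ε` bound. -/

noncomputable section

/-- The equivalent norm `|f| = ‖f‖_{ℓ₂} + sup_i |f i|` on `ℓ₂`. -/
def newNorm (f : lp (fun _ : ℕ => ℂ) 2) : ℝ := ‖f‖ + ⨆ i, ‖f i‖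

/-- `f_i = (e_{2i} + e_{2i+1})/(√2 + 1)`. -/
def fvec (i : ℕ) : lp (fun _ : ℕ => ℂ) 2 :=
  (((Real.sqrt 2 + 1 : ℝ) : ℂ))⁻¹ •
    (lp.single 2 (2 * i) (1 : ℂ) + lp.single 2 (2 * i + 1) (1 : ℂ))

theorem norm_sum_sq_eq_sum_norm_sq_of_pairwise_inner_eq_zero {𝕜 E ι : Type*} [RCLike 𝕜]
    [NormedAddCommGroup E] [InnerProductSpace 𝕜 E] {v : ι → E}
    (hv : Pairwise fun i j => inner 𝕜 (v i) (v j) = 0) (s : Finset ι) :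
    ‖∑ i ∈ s, v i‖ ^ 2 = ∑ i ∈ s, ‖v i‖ ^ 2 := by
  classical
  induction s using Finset.induction_on with
  | empty => simp
  | insert j s hj ih =>
    have hjs : inner 𝕜 (v j) (∑ i ∈ s, v i) = 0 :=
      (inner_sum s v (v j)).trans <|
        Finset.sum_eq_zero fun i hi => hv (ne_of_mem_of_not_mem hi hj).symm
    rw [Finset.sum_insert hj, Finset.sum_insert hj, ← ih, sq, sq, sq,
      norm_add_sq_eq_norm_sq_add_norm_sq_of_inner_eq_zero (𝕜 := 𝕜) _ _ hjs]

theorem iSup_ite_eq_of_exists {ι : Type*} {p : ι → Prop} [DecidablePred p] (hp : ∃ i, p i)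
    {r : ℝ} (hr : 0 ≤ r) : (⨆ i, if p i then r else 0) = r := by
  obtain ⟨i, hi⟩ := hp
  have : Nonempty ι := ⟨i⟩
  refine le_antisymm (ciSup_le fun j => ?_) ?_
  · split_ifs <;> simp [hr]
  · refine le_ciSup_of_le ⟨r, ?_⟩ i (by simp [hi])
    rintro _ ⟨j, rfl⟩
    dsimp only
    split_ifs <;> simp [hr]

theorem fvec_apply (i k : ℕ) :
    fvec i k = if k / 2 = i then (((√2 + 1 : ℝ) : ℂ))⁻¹ else 0 := by
  simp only [fvec, lp.coeFn_smul, lp.coeFn_add, Pi.smul_apply, Pi.add_apply, lp.single_apply,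
    Pi.single_apply]
  split_ifs <;> first | omega | simp

theorem inner_fvec_of_ne {i j : ℕ} (hij : i ≠ j) : inner ℂ (fvec i) (fvec j) = 0 := by
  rw [lp.inner_eq_tsum]
  refine (tsum_congr fun k => ?_).trans tsum_zero
  rw [fvec_apply, fvec_apply]
  split_ifs <;> first | omega | simp

theorem norm_fvec_sq (i : ℕ) : ‖fvec i‖ ^ 2 = 2 / (√2 + 1) ^ 2 := by
  have horth : inner ℂ (lp.single 2 (2 * i) 1 : lp (fun _ : ℕ => ℂ) 2)
      (lp.single 2 (2 * i + 1) 1) = 0 := by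
    rw [lp.inner_single_left, lp.single_apply_ne _ _ _ (by omega), inner_zero_right]
  rw [fvec, norm_smul, mul_pow, sq ‖_ + _‖,
    norm_add_sq_eq_norm_sq_add_norm_sq_of_inner_eq_zero (𝕜 := ℂ) _ _ horth]
  simp only [lp.norm_single (p := 2) two_pos, norm_one, norm_inv, Complex.norm_real]
  rw [Real.norm_of_nonneg (by positivity), inv_pow]
  ring

theorem norm_sum_smul_fvec_sq (s : Finset ℕ) (a : ℕ → ℂ) :
    ‖∑ i ∈ s, a i • fvec i‖ ^ 2 = 2 / (√2 + 1) ^ 2 * ∑ i ∈ s, ‖a i‖ ^ 2 := by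
  have horth : Pairwise fun i j => inner ℂ (a i • fvec i) (a j • fvec j) = 0 := fun i j hij => by
    dsimp only
    rw [inner_smul_left, inner_smul_right, inner_fvec_of_ne hij, mul_zero, mul_zero]
  rw [norm_sum_sq_eq_sum_norm_sq_of_pairwise_inner_eq_zero horth, Finset.mul_sum]
  refine Finset.sum_congr rfl fun i _ => ?_
  rw [norm_smul, mul_pow, norm_fvec_sq, mul_comm]

theorem sum_smul_fvec_apply (s : Finset ℕ) (a : ℕ → ℂ) (k : ℕ) :
    (∑ i ∈ s, a i • fvec i) k =
      if k / 2 ∈ s then a (k / 2) * (((√2 + 1 : ℝ) : ℂ))⁻¹ else 0 := by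
  simp only [lp.coeFn_sum, Finset.sum_apply, lp.coeFn_smul, Pi.smul_apply, fvec_apply,
    smul_eq_mul, mul_ite, mul_zero, Finset.sum_ite_eq]

theorem iSup_norm_sum_smul_fvec_const {s : Finset ℕ} (hs : s.Nonempty) (c : ℂ) :
    ⨆ k, ‖(∑ i ∈ s, c • fvec i) k‖ = ‖c‖ / (√2 + 1) := by
  have hcoord : ∀ k, ‖(∑ i ∈ s, c • fvec i) k‖ = if k / 2 ∈ s then ‖c‖ / (√2 + 1) else 0 := by
    intro k
    rw [sum_smul_fvec_apply s (fun _ => c)]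
    split_ifs
    · rw [norm_mul, norm_inv, Complex.norm_real, Real.norm_of_nonneg (by positivity),
        div_eq_mul_inv]
    · exact norm_zero
  obtain ⟨i, hi⟩ := hs
  simp only [hcoord]
  exact iSup_ite_eq_of_exists ⟨2 * i, by simpa using hi⟩ (by positivity)

theorem newNorm_nonneg (f : lp (fun _ : ℕ => ℂ) 2) : 0 ≤ newNorm f :=
  add_nonneg (norm_nonneg f) (Real.iSup_nonneg fun _ => norm_nonneg _)

theorem newNorm_sum_smul_fvec_const {s : Finset ℕ} (hs : s.Nonempty) (c : ℂ) :
    newNorm (∑ i ∈ s, c • fvec i) =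
      (√2 * √(s.card : ℝ) + 1) * ‖c‖ / (√2 + 1) := by
  have hnorm : ‖∑ i ∈ s, c • fvec i‖ = √2 * √(s.card : ℝ) * ‖c‖ / (√2 + 1) := by
    refine (sq_eq_sq₀ (norm_nonneg _) (by positivity)).1 ?_
    rw [norm_sum_smul_fvec_sq s (fun _ => c), Finset.sum_const, nsmul_eq_mul, div_pow, mul_pow,
      mul_pow, Real.sq_sqrt zero_le_two, Real.sq_sqrt s.card.cast_nonneg]
    ring
  rw [newNorm, hnorm, iSup_norm_sum_smul_fvec_const hs]
  ring

theorem newNorm_fvec (i : ℕ) : newNorm (fvec i) = 1 := by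
  have h := newNorm_sum_smul_fvec_const (Finset.singleton_nonempty i) 1
  rw [Finset.sum_singleton, one_smul] at h
  rw [h, Finset.card_singleton, Nat.cast_one, Real.sqrt_one, mul_one, norm_one, mul_one,
    div_self (by positivity)]

theorem newNorm_sum_fvec_div_sqrt_card {s : Finset ℕ} (hs : s.Nonempty) :
    newNorm (∑ i ∈ s, ((√(s.card : ℝ) : ℂ))⁻¹ • fvec i) =
      (√2 + (√(s.card : ℝ))⁻¹) / (√2 + 1) := by
  have hcard : 0 < √(s.card : ℝ) := Real.sqrt_pos.2 (by exact_mod_cast hs.card_pos)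
  rw [newNorm_sum_smul_fvec_const hs, norm_inv, Complex.norm_real,
    Real.norm_of_nonneg hcard.le]
  field_simp

theorem newNorm_sum_fvec_div_sqrt_card_le {s : Finset ℕ} (hs : 2 ≤ s.card) :
    newNorm (∑ i ∈ s, ((√(s.card : ℝ) : ℂ))⁻¹ • fvec i) ≤
      (√2 + (√2)⁻¹) / (√2 + 1) := by
  rw [newNorm_sum_fvec_div_sqrt_card (Finset.card_pos.1 (by omega))]
  gcongr
  exact_mod_cast hs

theorem sqrt_two_add_inv_div_lt_one : (√2 + (√2)⁻¹) / (√2 + 1) < 1 := by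
  rw [div_lt_one (by positivity), add_lt_add_iff_left]
  exact inv_lt_one_of_one_lt₀ Real.one_lt_sqrt_two

theorem newNorm_sum_fvec_div_sqrt_card_sq_lt {ε : ℝ}
    (hε : ε < 1 - ((√2 + (√2)⁻¹) / (√2 + 1)) ^ 2)
    {s : Finset ℕ} (hs : 2 ≤ s.card) :
    newNorm (∑ i ∈ s, ((√(s.card : ℝ) : ℂ))⁻¹ • fvec i) ^ 2 <
      (1 - ε) * ∑ _i ∈ s, ‖((√(s.card : ℝ) : ℂ))⁻¹‖ ^ 2 := by
  have hsum : ∑ _i ∈ s, ‖((√(s.card : ℝ) : ℂ))⁻¹‖ ^ 2 = 1 := by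
    have hcard : (0 : ℝ) < s.card := by exact_mod_cast (show 0 < s.card by omega)
    rw [Finset.sum_const, nsmul_eq_mul, norm_inv, Complex.norm_real,
      Real.norm_of_nonneg (Real.sqrt_nonneg _), inv_pow, Real.sq_sqrt hcard.le,
      mul_inv_cancel₀ hcard.ne']
  rw [hsum, mul_one]
  calc _ ≤ ((√2 + (√2)⁻¹) / (√2 + 1)) ^ 2 := by
        gcongr
        · exact newNorm_nonneg _
        · exact newNorm_sum_fvec_div_sqrt_card_le hs
    _ < 1 - ε := by linarith

theorem Reps_conjecture_fails_for_equivalent_norm :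
    -- each `f_i` has norm one in the new norm
    (∀ i, newNorm (fvec i) = 1) ∧
    -- `{f_i}` is a Riesz basic sequence
    (∃ A B : ℝ, 0 < A ∧ 0 < B ∧ ∀ (s : Finset ℕ) (a : ℕ → ℂ),
      A * ∑ i ∈ s, ‖a i‖ ^ 2 ≤ ‖∑ i ∈ s, a i • fvec i‖ ^ 2 ∧
      ‖∑ i ∈ s, a i • fvec i‖ ^ 2 ≤ B * ∑ i ∈ s, ‖a i‖ ^ 2) ∧
    -- the explicit computation for `a_i = 1/√n` on a set of cardinality `n`
    (∀ s : Finset ℕ, s.Nonempty →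
      newNorm (∑ i ∈ s, ((Real.sqrt (s.card : ℝ) : ℂ))⁻¹ • fvec i) =
        (Real.sqrt 2 + (Real.sqrt (s.card : ℝ))⁻¹) / (Real.sqrt 2 + 1)) ∧
    -- this value is bounded away from 1 for `n ≥ 2`
    (∃ c : ℝ, c < 1 ∧ ∀ s : Finset ℕ, 2 ≤ s.card →
      newNorm (∑ i ∈ s, ((Real.sqrt (s.card : ℝ) : ℂ))⁻¹ • fvec i) ≤ c) ∧
    -- hence no infinite subset satisfies the `R_ε` inequalities for small `ε`
    (∃ ε₀ : ℝ, 0 < ε₀ ∧ ∀ ε : ℝ, 0 < ε → ε < ε₀ → ∀ J : Set ℕ, J.Infinite →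
      ¬ (∀ s : Finset ℕ, ↑s ⊆ J → ∀ a : ℕ → ℂ,
        (1 - ε) * ∑ i ∈ s, ‖a i‖ ^ 2 ≤ newNorm (∑ i ∈ s, a i • fvec i) ^ 2 ∧
        newNorm (∑ i ∈ s, a i • fvec i) ^ 2 ≤ (1 + ε) * ∑ i ∈ s, ‖a i‖ ^ 2)) := by
  have hA : 0 < 2 / (√2 + 1) ^ 2 := by positivity
  have hε₀ : 0 < 1 - ((√2 + (√2)⁻¹) / (√2 + 1)) ^ 2 :=
    sub_pos.2 (pow_lt_one₀ (by positivity) sqrt_two_add_inv_div_lt_one two_ne_zero)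
  refine ⟨newNorm_fvec, ⟨_, _, hA, hA, fun s a => ?_⟩,
    fun s hs => newNorm_sum_fvec_div_sqrt_card hs,
    ⟨_, sqrt_two_add_inv_div_lt_one, fun s hs => newNorm_sum_fvec_div_sqrt_card_le hs⟩,
    ⟨_, hε₀, fun ε _ hε J hJ hRiesz => ?_⟩⟩
  · rw [norm_sum_smul_fvec_sq]
    exact ⟨le_rfl, le_rfl⟩
  · obtain ⟨s, hsJ, hs⟩ := hJ.exists_subset_card_eq 2
    exact (newNorm_sum_fvec_div_sqrt_card_sq_lt hε hs.ge).not_ge (hRiesz s hsJ _).1
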